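/- arXiv:1401.5958 — 7 statements merged into one kernel-verified Lean document; each statement's English description precedes it below -/
import Mathlib

section
/- For all non-negative integers p, q, k: ∑_{j=0}^{p} (-1)^j * C(j+q, q) * C(k+q+j, k) * C(k+q+p+1, p-j) = C(k+q, q). -/
lemma aux0 (p : ℕ) : ∀ n : ℕ, ∑ j ∈ Finset.range (n + 1),
    (-1 : ℤ) ^ j * ((p + 1).choose (n - j)) = p.choose n := by
  intro n
  induction n with
  | zero => simp
  | succ n ih =>
    rw [Finset.sum_range_succ' _ (n + 1)]
    have h : ∀ i, (-1 : ℤ) ^ (i + 1) * ((p + 1).choose (n + 1 - (i + 1)))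
        = -((-1 : ℤ) ^ i * ((p + 1).choose (n - i))) := by
      intro i
      rw [show n + 1 - (i + 1) = n - i from by omega, pow_succ]
      ring
    rw [Finset.sum_congr rfl (fun i _ => h i), Finset.sum_neg_distrib]
    simp only [Nat.sub_zero, pow_zero, one_mul]
    rw [ih]
    rw [Nat.choose_succ_succ p n]
    push_cast
    ring

lemma F_rec (m N n : ℕ) :
    (∑ j ∈ Finset.range (n + 2), (-1 : ℤ) ^ j * ((m + 1 + j).choose j) * (N.choose (n + 1 - j)))
    = (∑ j ∈ Finset.range (n + 2), (-1 : ℤ) ^ j * ((m + j).choose j) * (N.choose (n + 1 - j)))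
      - ∑ j ∈ Finset.range (n + 1), (-1 : ℤ) ^ j * ((m + 1 + j).choose j) * (N.choose (n - j)) := by
  rw [Finset.sum_range_succ' (fun j => (-1 : ℤ) ^ j * ((m + 1 + j).choose j) * (N.choose (n + 1 - j))) (n + 1),
      Finset.sum_range_succ' (fun j => (-1 : ℤ) ^ j * ((m + j).choose j) * (N.choose (n + 1 - j))) (n + 1)]
  simp only [Nat.sub_zero, pow_zero, one_mul, Nat.add_zero, Nat.choose_zero_right, Nat.cast_one]
  have hsum : (∑ i ∈ Finset.range (n + 1),
        (-1 : ℤ) ^ (i + 1) * ((m + 1 + (i + 1)).choose (i + 1)) * (N.choose (n + 1 - (i + 1))))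
      + ∑ j ∈ Finset.range (n + 1), (-1 : ℤ) ^ j * ((m + 1 + j).choose j) * (N.choose (n - j))
      = ∑ i ∈ Finset.range (n + 1),
        (-1 : ℤ) ^ (i + 1) * ((m + (i + 1)).choose (i + 1)) * (N.choose (n + 1 - (i + 1))) := by
    rw [← Finset.sum_add_distrib]
    refine Finset.sum_congr rfl (fun i _ => ?_)
    have hp : (m + 1 + (i + 1)).choose (i + 1) = (m + 1 + i).choose i + (m + (i + 1)).choose (i + 1) := by
      rw [show m + 1 + (i + 1) = (m + 1 + i) + 1 from by ring, Nat.choose_succ_succ]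
      congr 2
      omega
    rw [hp, show n + 1 - (i + 1) = n - i from by omega]
    push_cast [pow_succ]
    ring
  linarith

lemma auxF (m : ℕ) : ∀ p n : ℕ, ∑ j ∈ Finset.range (n + 1),
    (-1 : ℤ) ^ j * ((m + j).choose j) * ((m + p + 1).choose (n - j)) = p.choose n := by
  induction m with
  | zero =>
    intro p n
    have := aux0 p n
    simpa using this
  | succ m ih =>
    intro p n
    induction n with
    | zero => simp
    | succ n ihn =>
      rw [F_rec m (m + 1 + p + 1) n, ihn]
      have h2 := ih (p + 1) (n + 1)
      rw [show m + (p + 1) + 1 = m + 1 + p + 1 from by ring] at h2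
      rw [h2, Nat.choose_succ_succ p n]
      push_cast
      ring

theorem binomial_identity_n0 (p q k : ℕ) :
    ∑ j ∈ Finset.range (p + 1),
      (-1 : ℤ) ^ j * ((j + q).choose q) * ((k + q + j).choose k) *
        ((k + q + p + 1).choose (p - j))
    = (k + q).choose q := by
  have key : ∀ j : ℕ, ((j + q).choose q : ℤ) * ((k + q + j).choose k)
      = ((k + q).choose q) * ((k + q + j).choose j) := by
    intro j
    have h := Nat.choose_mul (n := k + q + j) (k := q + j) (s := j)
      (by omega)
    have e1 : (k + q + j).choose (q + j) = (k + q + j).choose k := by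
      rw [← Nat.choose_symm (show q + j ≤ k + q + j by omega)]
      congr 1
      omega
    have e2 : (q + j).choose j = (q + j).choose q := by
      rw [← Nat.choose_symm (show j ≤ q + j by omega)]
      congr 1
      omega
    have e3 : k + q + j - j = k + q := by omega
    have e4 : q + j - j = q := by omega
    rw [e1, e2, e3, e4] at h
    -- h : (k+q+j).choose k * (q+j).choose q = (k+q+j).choose j * (k+q).choose q
    have h' : (q + j).choose q * ((k + q + j).choose k)
        = (k + q).choose q * ((k + q + j).choose j) :=
      (Nat.mul_comm _ _).trans (h.trans (Nat.mul_comm _ _))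
    rw [show j + q = q + j from by omega]
    exact_mod_cast h'
  have hfac : ∑ j ∈ Finset.range (p + 1),
      (-1 : ℤ) ^ j * ((j + q).choose q) * ((k + q + j).choose k) *
        ((k + q + p + 1).choose (p - j))
      = ((k + q).choose q : ℤ) * ∑ j ∈ Finset.range (p + 1),
        (-1 : ℤ) ^ j * ((k + q + j).choose j) * ((k + q + p + 1).choose (p - j)) := by
    rw [Finset.mul_sum]
    refine Finset.sum_congr rfl (fun j _ => ?_)
    linear_combination ((-1 : ℤ) ^ j * ((k + q + p + 1).choose (p - j))) * key j
  rw [hfac, auxF (k + q) p p, Nat.choose_self]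
  push_cast
  ring
end

section
/- For all non-negative integers p, q, k: ∑_{j=0}^{p} (-1)^j * C(p+q+k+1, p-j) * C(q+j, q) * C(q+k+1+j, k) = C(p+q+k+1, k). -/
/-!
Choosing first `p - j` and then `k` elements out of `N = p + q + k + 1` is the same as choosing
first `k` and then `p - j`, so `C(N, k)` factors out of every summand, leaving
`∑ⱼ (-1)^j C(p + q + 1, p - j) C(q + j, q)`. Since `(-1)^j C(q + j, q) = C(-(q + 1), j)`, this is a
Chu–Vandermonde convolution and equals `C(p + q + 1 - (q + 1), p) = C(p, p) = 1`.
-/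

open Finset

theorem Ring.choose_neg_natCast_succ (q j : ℕ) :
    Ring.choose (-((q + 1 : ℕ) : ℤ)) j = (-1) ^ j * ((q + j).choose q : ℤ) := by
  rw [Ring.choose_neg, Units.smul_def, Int.coe_negOnePow_natCast, smul_eq_mul,
    show ((q + 1 : ℕ) : ℤ) + j - 1 = ((q + j : ℕ) : ℤ) by push_cast; ring, Ring.choose_natCast,
    Nat.choose_symm_add]

theorem sum_range_neg_one_pow_mul_choose_mul_choose (t q p : ℕ) :
    ∑ j ∈ range (p + 1), (-1 : ℤ) ^ j * ((q + 1 + t).choose (p - j)) * ((q + j).choose q) =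
      t.choose p := by
  have vandermonde := Ring.add_choose_eq p (Commute.all (-((q + 1 : ℕ) : ℤ)) ((q + 1 + t : ℕ) : ℤ))
  rw [Nat.cast_add _ t, neg_add_cancel_left, Ring.choose_natCast, ← Nat.cast_add,
    Nat.sum_antidiagonal_eq_sum_range_succ
    (fun i j ↦ Ring.choose (-((q + 1 : ℕ) : ℤ)) i * Ring.choose ((q + 1 + t : ℕ) : ℤ) j)] at vandermonde
  rw [vandermonde]
  refine sum_congr rfl fun j _ ↦ ?_
  rw [Ring.choose_neg_natCast_succ, Ring.choose_natCast]
  ring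

theorem Nat.choose_mul_choose_sub_comm (n a b : ℕ) :
    n.choose a * (n - a).choose b = n.choose b * (n - b).choose a := by
  have ha := Nat.choose_mul (n := n) (Nat.le_add_right a b)
  have hb := Nat.choose_mul (n := n) (Nat.le_add_left b a)
  rw [Nat.add_sub_cancel_left, Nat.choose_symm_add] at ha
  rw [Nat.add_sub_cancel] at hb
  rw [← ha, hb]

theorem binomial_identity_n0' (p q k : ℕ) :
    ∑ j ∈ Finset.range (p + 1),
      (-1 : ℤ) ^ j * ((p + q + k + 1).choose (p - j)) * ((q + j).choose q) *
        ((q + k + 1 + j).choose k)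
    = (p + q + k + 1).choose k := by
  have factor : ∀ j ∈ range (p + 1),
      (-1 : ℤ) ^ j * ((p + q + k + 1).choose (p - j)) * ((q + j).choose q) *
        ((q + k + 1 + j).choose k) =
      (p + q + k + 1).choose k * ((-1 : ℤ) ^ j * ((q + 1 + p).choose (p - j)) * ((q + j).choose q)) := by
    intro j hmem
    have hj : j ≤ p := Nat.lt_succ_iff.mp (mem_range.mp hmem)
    have swap := Nat.choose_mul_choose_sub_comm (p + q + k + 1) (p - j) k
    rw [show p + q + k + 1 - (p - j) = q + k + 1 + j by omega,
      show p + q + k + 1 - k = q + 1 + p by omega] at swap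
    have swap' := congrArg (Nat.cast : ℕ → ℤ) swap
    push_cast at swap'
    linear_combination (-1 : ℤ) ^ j * ((q + j).choose q : ℤ) * swap'
  rw [sum_congr rfl factor, ← mul_sum, sum_range_neg_one_pow_mul_choose_mul_choose,
    Nat.choose_self, Nat.cast_one, mul_one]
end

section
/- For all non-negative integers n, p, q, r with p ≥ n: ∑_{j=0}^{p} (-1)^j * C(j+q, q) * C(n+p+q+1, p-j) * S_r(n+r+j+q, r+j+q) = C(n+q, q) * (r-1)(r-2)⋯(r-n), where S_r denotes the r-Stirling number of the second kind and (r-1)(r-2)⋯(r-n) is the falling factorial (r-1)^{\underline{n}} (interpreted over the integers). -/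
/-!
Write `W(n, s) = S_r(n + r + s, r + s)` and `G_{n,q}(x) = ∑ j, C(j + q, q) W(n, j + q) (-x) ^ j`.
The recurrence of `S_r` gives `(1 + x) G_{n+1,0} = r G_{n,0} - x G_{n,1}` and
`(1 + x) G_{n+1,q+1} = G_{n+1,q} + (r + q + 1) G_{n,q+1} - (q + 2) x G_{n,q+2}`, while
`G_{0,q} = (1 + x) ^ (-(q + 1))`. By induction on `n` and then `q`,
`(1 + x) ^ (2n + q + 1) G_{n,q}` is a polynomial of degree at most `n` whose leading coefficient is
`C(n + q, q) (r - 1)^{\underline n}`, since these numbers satisfy the same recurrences. The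
left-hand side of the identity is the coefficient of `x ^ p` in `(1 + x) ^ (p - n)` times that
polynomial, i.e. its leading coefficient.
-/

/-- The unsigned `r`-Stirling number of the first kind. -/
def rStirling1 (r : ℕ) : ℕ → ℕ → ℕ
  | 0, k => if r = 0 ∧ k = 0 then 1 else 0
  | n + 1, k =>
    if n + 1 < r then 0
    else if n + 1 = r then (if k = r then 1 else 0)
    else (if k = 0 then 0 else rStirling1 r n (k - 1)) + n * rStirling1 r n k

/-- The `r`-Stirling number of the second kind. -/
def rStirling2 (r : ℕ) : ℕ → ℕ → ℕ
  | 0, k => if r = 0 ∧ k = 0 then 1 else 0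
  | n + 1, k =>
    if n + 1 < r then 0
    else if n + 1 = r then (if k = r then 1 else 0)
    else (if k = 0 then 0 else rStirling2 r n (k - 1)) + k * rStirling2 r n k

open Finset

section rStirling2

variable {r : ℕ}

theorem rStirling2_eq_zero_of_lt_r {k : ℕ} (hk : k < r) (m : ℕ) : rStirling2 r m k = 0 := by
  induction m generalizing k with
  | zero => simp [rStirling2]; omega
  | succ m ih =>
    simp only [rStirling2]
    split_ifs <;> simp_all [ih (k := k - 1) (by omega)]

theorem rStirling2_eq_zero_of_lt {m k : ℕ} (hmk : m < k) : rStirling2 r m k = 0 := by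
  induction m generalizing k with
  | zero => simp [rStirling2]; omega
  | succ m ih =>
    simp only [rStirling2]
    split_ifs <;> simp_all [ih (k := k - 1) (by omega), ih (k := k) (by omega)]

theorem rStirling2_succ_succ {m : ℕ} (hm : r ≤ m) (k : ℕ) :
    rStirling2 r (m + 1) (k + 1) = rStirling2 r m k + (k + 1) * rStirling2 r m (k + 1) := by
  simp only [rStirling2]
  rw [if_neg (by omega), if_neg (by omega), if_neg (by omega), Nat.add_sub_cancel]

theorem rStirling2_self {m : ℕ} (hm : r ≤ m) : rStirling2 r m m = 1 := by
  induction m with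
  | zero => simp [rStirling2]; omega
  | succ m ih =>
    rcases hm.eq_or_lt with rfl | hlt
    · simp [rStirling2]
    · rw [rStirling2_succ_succ (by omega), ih (by omega), rStirling2_eq_zero_of_lt (by omega),
        mul_zero, add_zero]

theorem rStirling2_succ_r {m : ℕ} (hm : r ≤ m) :
    rStirling2 r (m + 1) r = r * rStirling2 r m r := by
  cases r with
  | zero => simp [rStirling2]
  | succ r =>
    rw [rStirling2_succ_succ hm, rStirling2_eq_zero_of_lt_r (Nat.lt_succ_self r), zero_add]

end rStirling2

/-- The complete homogeneous symmetric polynomial `h_n(r, r + 1, …, r + s)`. -/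
def rStirling2Diag (r n s : ℕ) : ℕ := rStirling2 r (n + r + s) (r + s)

section rStirling2Diag

variable {r : ℕ}

theorem rStirling2Diag_zero_left (s : ℕ) : rStirling2Diag r 0 s = 1 := by
  rw [rStirling2Diag, zero_add]
  exact rStirling2_self (by omega)

theorem rStirling2Diag_succ_succ (n s : ℕ) :
    rStirling2Diag r (n + 1) (s + 1) =
      rStirling2Diag r (n + 1) s + (r + s + 1) * rStirling2Diag r n (s + 1) := by
  simp only [rStirling2Diag]
  rw [show n + 1 + r + (s + 1) = n + r + s + 1 + 1 by ring, ← add_assoc r s 1,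
    rStirling2_succ_succ (by omega)]
  ring_nf

theorem rStirling2Diag_succ_zero (n : ℕ) :
    rStirling2Diag r (n + 1) 0 = r * rStirling2Diag r n 0 := by
  simp only [rStirling2Diag, add_zero]
  rw [show n + 1 + r = n + r + 1 by ring, rStirling2_succ_r (by omega)]

end rStirling2Diag

/-- The coefficient of `x ^ p` in `(1 + x) ^ M * ∑ j, g j * (-x) ^ j`. -/
def altChooseSum (M : ℕ) (g : ℕ → ℤ) (p : ℕ) : ℤ :=
  ∑ j ∈ range (p + 1), (-1) ^ j * M.choose (p - j) * g j

section altChooseSum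

variable {M : ℕ}

theorem altChooseSum_zero (g : ℕ → ℤ) : altChooseSum M g 0 = g 0 := by
  simp [altChooseSum]

theorem altChooseSum_add (f g : ℕ → ℤ) (p : ℕ) :
    altChooseSum M (fun j => f j + g j) p = altChooseSum M f p + altChooseSum M g p := by
  simp only [altChooseSum, mul_add, sum_add_distrib]

theorem altChooseSum_const_mul (c : ℤ) (g : ℕ → ℤ) (p : ℕ) :
    altChooseSum M (fun j => c * g j) p = c * altChooseSum M g p := by
  simp only [altChooseSum, mul_sum]
  exact sum_congr rfl fun _ _ => by ring

theorem altChooseSum_succ (g : ℕ → ℤ) (p : ℕ) :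
    altChooseSum M g (p + 1) =
      M.choose (p + 1) * g 0 - altChooseSum M (fun j => g (j + 1)) p := by
  rw [altChooseSum, sum_range_succ', altChooseSum, sub_eq_add_neg, ← sum_neg_distrib, add_comm]
  congr 1
  · simp
  · exact sum_congr rfl fun j _ => by
      rw [Nat.add_sub_add_right, pow_succ]; ring

theorem altChooseSum_succ_succ_left (g : ℕ → ℤ) (p : ℕ) :
    altChooseSum (M + 1) g (p + 1) = altChooseSum M g (p + 1) + altChooseSum M g p := by
  have hpascal : ∀ j ∈ range (p + 1), (-1) ^ j * ((M + 1).choose (p + 1 - j) : ℤ) * g j =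
      (-1) ^ j * (M.choose (p + 1 - j) : ℤ) * g j +
        (-1) ^ j * (M.choose (p - j) : ℤ) * g j := by
    intro j hj
    rw [show p + 1 - j = p - j + 1 by have := mem_range.mp hj; omega, Nat.choose_succ_succ']
    push_cast
    ring
  simp only [altChooseSum]
  rw [sum_range_succ, sum_congr rfl hpascal, sum_add_distrib, sum_range_succ _ (p + 1)]
  simp only [Nat.sub_self, Nat.choose_zero_right]
  ring

/-- The hypotheses say `(1 + x) G = A - x B` for the generating functions
`G = ∑ j, g j * (-x) ^ j` and similarly `A`, `B`. -/
theorem altChooseSum_succ_succ_of_eq {g a b : ℕ → ℤ} (h₀ : g 0 = a 0)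
    (hsucc : ∀ j, g (j + 1) = a (j + 1) + g j + b j) (p : ℕ) :
    altChooseSum (M + 1) g (p + 1) = altChooseSum M a (p + 1) - altChooseSum M b p := by
  have hshift : altChooseSum M (fun j => g (j + 1)) p =
      altChooseSum M (fun j => a (j + 1)) p + altChooseSum M g p + altChooseSum M b p := by
    simp only [hsucc, altChooseSum_add]
  rw [altChooseSum_succ_succ_left, altChooseSum_succ, altChooseSum_succ a, hshift, h₀]
  ring

end altChooseSum

theorem altChooseSum_one (M p : ℕ) : altChooseSum (M + 1) (fun _ => 1) p = M.choose p := by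
  induction p with
  | zero => simp [altChooseSum_zero]
  | succ p ih =>
    rw [altChooseSum_succ, ih, Nat.choose_succ_succ']
    push_cast
    ring

/-- `∑ j, C(j + q, q) * (-x) ^ j = (1 + x) ^ (-(q + 1))`. -/
theorem altChooseSum_choose_add (M q p : ℕ) :
    altChooseSum (M + q + 1) (fun j => ((j + q).choose q : ℤ)) p = M.choose p := by
  induction q generalizing p with
  | zero => simpa using altChooseSum_one M p
  | succ q ih =>
    cases p with
    | zero => simp [altChooseSum_zero]
    | succ p =>
      rw [← add_assoc M q 1, altChooseSum_succ_succ_of_eq (a := fun j => ((j + q).choose q : ℤ))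
        (b := fun _ => 0), ih]
      · simp [altChooseSum]
      · simp
      · intro j
        rw [show j + 1 + (q + 1) = j + q + 1 + 1 by ring, Nat.choose_succ_succ',
          show j + 1 + q = j + q + 1 by ring, show j + (q + 1) = j + q + 1 by ring]
        push_cast
        ring

def stirlingWeight (r n q j : ℕ) : ℤ := (j + q).choose q * rStirling2Diag r n (j + q)

section stirlingWeight

variable {r M : ℕ}

theorem altChooseSum_stirlingWeight_succ_zero (n p : ℕ) :
    altChooseSum (M + 1) (stirlingWeight r (n + 1) 0) (p + 1) =
      r * altChooseSum M (stirlingWeight r n 0) (p + 1) -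
        altChooseSum M (stirlingWeight r n 1) p := by
  rw [← altChooseSum_const_mul]
  refine altChooseSum_succ_succ_of_eq ?_ (fun j => ?_) p
  · simp [stirlingWeight, rStirling2Diag_succ_zero]
  · simp only [stirlingWeight, add_zero, Nat.choose_zero_right, Nat.choose_one_right,
      rStirling2Diag_succ_succ]
    push_cast
    ring

theorem altChooseSum_stirlingWeight_succ_succ (n q p : ℕ) :
    altChooseSum (M + 1) (stirlingWeight r (n + 1) (q + 1)) (p + 1) =
      altChooseSum M (stirlingWeight r (n + 1) q) (p + 1) +
        (r + q + 1) * altChooseSum M (stirlingWeight r n (q + 1)) (p + 1) -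
        (q + 2) * altChooseSum M (stirlingWeight r n (q + 2)) p := by
  rw [← altChooseSum_const_mul, ← altChooseSum_const_mul, ← altChooseSum_add]
  refine altChooseSum_succ_succ_of_eq ?_ (fun j => ?_) p
  · simp [stirlingWeight, rStirling2Diag_succ_succ]
  · have hchoose : ((j + q + 1 + 1).choose (q + 2) * (q + 2) : ℤ) =
        ((j + q + 1).choose q + (j + q + 1).choose (q + 1)) * (j + 1) := by
      have := Nat.choose_succ_right_eq (j + q + 1 + 1) (q + 1)
      rw [show j + q + 1 + 1 - (q + 1) = j + 1 by omega, Nat.choose_succ_succ'] at this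
      exact_mod_cast this
    simp only [stirlingWeight]
    rw [show j + 1 + (q + 1) = j + q + 1 + 1 by ring, show j + 1 + q = j + q + 1 by ring,
      show j + (q + 1) = j + q + 1 by ring, show j + (q + 2) = j + q + 1 + 1 by ring,
      rStirling2Diag_succ_succ, Nat.choose_succ_succ' (j + q + 1)]
    push_cast
    linear_combination -(rStirling2Diag r n (j + q + 1 + 1) : ℤ) * hchoose

end stirlingWeight

def stirlingSumValue (r n q : ℕ) : ℤ :=
  (n + q).choose q * ∏ i ∈ range n, ((r : ℤ) - 1 - i)

theorem stirlingSumValue_zero_left (r q : ℕ) : stirlingSumValue r 0 q = 1 := by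
  simp [stirlingSumValue]

theorem stirlingSumValue_succ_zero (r n : ℕ) :
    stirlingSumValue r (n + 1) 0 = r * stirlingSumValue r n 0 - stirlingSumValue r n 1 := by
  simp only [stirlingSumValue, add_zero, Nat.choose_zero_right, Nat.choose_one_right,
    prod_range_succ]
  push_cast
  ring

theorem stirlingSumValue_succ_succ (r n q : ℕ) :
    stirlingSumValue r (n + 1) (q + 1) =
      stirlingSumValue r (n + 1) q + (r + q + 1) * stirlingSumValue r n (q + 1) -
        (q + 2) * stirlingSumValue r n (q + 2) := by
  have hchoose :
      ((n + q + 2).choose (q + 2) * (q + 2) : ℤ) = (n + q + 2) * (n + q + 1).choose (q + 1) := by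
    exact_mod_cast (Nat.add_one_mul_choose_eq (n + q + 1) (q + 1)).symm
  simp only [stirlingSumValue, prod_range_succ]
  rw [show n + 1 + (q + 1) = n + q + 1 + 1 by ring, show n + 1 + q = n + q + 1 by ring,
    show n + (q + 1) = n + q + 1 by ring, show n + (q + 2) = n + q + 2 by ring,
    Nat.choose_succ_succ' (n + q + 1)]
  push_cast
  linear_combination (∏ i ∈ range n, ((r : ℤ) - 1 - i)) * hchoose

/-- `(1 + x) ^ (2 n + q + 1) ∑ j, stirlingWeight r n q j * (-x) ^ j` is a polynomial of degree
at most `n` with leading coefficient `stirlingSumValue r n q`. -/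
theorem altChooseSum_stirlingWeight (r n q M p : ℕ) (hlo : 2 * n + q + 1 ≤ M)
    (hhi : M ≤ n + p + q + 1) :
    altChooseSum M (stirlingWeight r n q) p =
      if M = n + p + q + 1 then stirlingSumValue r n q else 0 := by
  induction n generalizing q M p with
  | zero =>
    obtain ⟨d, rfl⟩ : ∃ d, M = d + q + 1 := ⟨M - q - 1, by omega⟩
    have hweight : stirlingWeight r 0 q = fun j => ((j + q).choose q : ℤ) := by
      funext j
      simp [stirlingWeight, rStirling2Diag_zero_left]
    rw [hweight, altChooseSum_choose_add, stirlingSumValue_zero_left]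
    split_ifs with h
    · simp [show d = p by omega]
    · simp [Nat.choose_eq_zero_of_lt (show d < p by omega)]
  | succ n ih =>
    induction q generalizing M p with
    | zero =>
      obtain ⟨M, rfl⟩ : ∃ M', M = M' + 1 := ⟨M - 1, by omega⟩
      obtain ⟨p, rfl⟩ : ∃ p', p = p' + 1 := ⟨p - 1, by omega⟩
      rw [altChooseSum_stirlingWeight_succ_zero, ih 0 M (p + 1) (by omega) (by omega),
        ih 1 M p (by omega) (by omega), stirlingSumValue_succ_zero]
      split_ifs <;> omega
    | succ q ihq =>
      obtain ⟨M, rfl⟩ : ∃ M', M = M' + 1 := ⟨M - 1, by omega⟩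
      obtain ⟨p, rfl⟩ : ∃ p', p = p' + 1 := ⟨p - 1, by omega⟩
      rw [altChooseSum_stirlingWeight_succ_succ, ihq M (p + 1) (by omega) (by omega),
        ih (q + 1) M (p + 1) (by omega) (by omega), ih (q + 2) M p (by omega) (by omega),
        stirlingSumValue_succ_succ]
      split_ifs <;> omega

theorem rStirling2_binomial_identity (n p q r : ℕ) (hp : n ≤ p) :
    ∑ j ∈ Finset.range (p + 1),
      (-1 : ℤ) ^ j * ((j + q).choose q) * ((n + p + q + 1).choose (p - j)) *
        rStirling2 r (n + r + j + q) (r + j + q)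
    = ((n + q).choose q : ℤ) * ∏ i ∈ Finset.range n, ((r : ℤ) - 1 - i) := by
  have h := altChooseSum_stirlingWeight r n q (n + p + q + 1) p (by omega) le_rfl
  rw [if_pos rfl] at h
  rw [← stirlingSumValue, ← h, altChooseSum]
  refine sum_congr rfl fun j _ => ?_
  rw [stirlingWeight, rStirling2Diag, ← add_assoc (n + r), ← add_assoc r]
  ring
end

section
/- For all non-negative integers n, p, q, k with p ≥ n: ∑_{j=0}^{p} (-1)^{n-j} * C(j+q, q) * C(n+k+q+j, k) * C(n+k+p+q+1, p-j) * S(j+n+q+1, j+q+1) = C(n+k+q, q) * s(n+k, k), where s denotes the unsigned Stirling number of the first kind and S the Stirling number of the second kind. -/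
/-- The unsigned Stirling number of the first kind. -/
def stirling1 (n k : ℕ) : ℕ := rStirling1 0 n k

/-- The Stirling number of the second kind. -/
def stirling2 (n k : ℕ) : ℕ := rStirling2 0 n k

/-!
Up to the factor `q! k!`, the `j`-th summand is the value at `x = j` of the polynomial
`A(x) = (x+1)⋯(x+q) · (x+n+q+1)⋯(x+n+q+k) · σₙ(x+q+1)`, where `σₙ` is the Stirling polynomial:
it has degree `2n`, satisfies `σₙ(x) = S(x+n, x)` and `σₙ(-x-n) = s(x+n, x)` for natural `x`, and
vanishes at `0, -1, …, -n` when `n > 0`. It is defined by summing the difference equation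
`σₙ₊₁(x+1) - σₙ₊₁(x) = (x+1) σₙ(x+1)`, which at natural `x` is the recurrence of `S` and at
`x = -(m+n+2)` that of `s`.

As `deg A = q + k + 2n < N := n + k + p + q + 1`, the `N`-th finite difference of `A` at
`-(n+k+q+1)` vanishes. Of its `N + 1` values, `A(-1), …, A(-(n+k+q))` are zero (the three factors
take care of the three ranges), `A(0), …, A(p)` give the sum, and `A(-(n+k+q+1))` gives
`± q! k! C(n+k+q, q) s(n+k, k)`.
-/

open Polynomial Finset
open scoped Nat

lemma stirling1_zero_succ (k : ℕ) : stirling1 0 (k + 1) = 0 := by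
  simp [stirling1, rStirling1]

lemma stirling2_zero_succ (k : ℕ) : stirling2 0 (k + 1) = 0 := by
  simp [stirling2, rStirling2]

lemma stirling1_succ_zero (n : ℕ) : stirling1 (n + 1) 0 = 0 := by
  induction n with
  | zero => simp [stirling1, rStirling1]
  | succ n ih => simpa [stirling1, rStirling1] using ih

lemma stirling2_succ_zero (n : ℕ) : stirling2 (n + 1) 0 = 0 := by
  simp [stirling2, rStirling2]

lemma stirling1_succ_succ (n k : ℕ) :
    stirling1 (n + 1) (k + 1) = stirling1 n k + n * stirling1 n (k + 1) := by
  simp [stirling1, rStirling1]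

lemma stirling2_succ_succ (n k : ℕ) :
    stirling2 (n + 1) (k + 1) = stirling2 n k + (k + 1) * stirling2 n (k + 1) := by
  simp [stirling2, rStirling2]

lemma stirling1_eq_zero_of_lt {n k : ℕ} (h : n < k) : stirling1 n k = 0 := by
  induction n generalizing k with
  | zero => obtain ⟨k, rfl⟩ := Nat.exists_eq_succ_of_ne_zero h.ne'; exact stirling1_zero_succ k
  | succ n ih =>
    obtain ⟨k, rfl⟩ := Nat.exists_eq_succ_of_ne_zero (by omega : k ≠ 0)
    rw [stirling1_succ_succ, ih (by omega), ih (by omega), mul_zero, add_zero]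

lemma stirling2_eq_zero_of_lt {n k : ℕ} (h : n < k) : stirling2 n k = 0 := by
  induction n generalizing k with
  | zero => obtain ⟨k, rfl⟩ := Nat.exists_eq_succ_of_ne_zero h.ne'; exact stirling2_zero_succ k
  | succ n ih =>
    obtain ⟨k, rfl⟩ := Nat.exists_eq_succ_of_ne_zero (by omega : k ≠ 0)
    rw [stirling2_succ_succ, ih (by omega), ih (by omega), mul_zero, add_zero]

lemma stirling1_self (n : ℕ) : stirling1 n n = 1 := by
  induction n with
  | zero => simp [stirling1, rStirling1]
  | succ n ih =>
    rw [stirling1_succ_succ, ih, stirling1_eq_zero_of_lt n.lt_succ_self, mul_zero, add_zero]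

lemma stirling2_self (n : ℕ) : stirling2 n n = 1 := by
  induction n with
  | zero => simp [stirling2, rStirling2]
  | succ n ih =>
    rw [stirling2_succ_succ, ih, stirling2_eq_zero_of_lt n.lt_succ_self, mul_zero, add_zero]

namespace Polynomial

lemma natDegree_bernoulli_le (n : ℕ) : (bernoulli n).natDegree ≤ n := by
  rw [bernoulli_def]
  exact natDegree_sum_le_of_forall_le _ _ fun i hi =>
    (natDegree_monomial_le _).trans (mem_range_succ_iff.mp hi)

lemma exists_antidifference (p : ℚ[X]) :
    ∃ Q : ℚ[X], Q.natDegree ≤ p.natDegree + 1 ∧ Q.eval 0 = 0 ∧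
      ∀ x, Q.eval (x + 1) - Q.eval x = p.eval x := by
  set B : ℚ[X] := ∑ i ∈ range (p.natDegree + 1), C (p.coeff i / (i + 1)) * bernoulli (i + 1)
  refine ⟨B - C (B.eval 0), ?_, by simp, fun x => ?_⟩
  · rw [natDegree_sub_C]
    refine natDegree_sum_le_of_forall_le _ _ fun i hi => ?_
    exact natDegree_C_mul_le _ _ |>.trans <| (natDegree_bernoulli_le _).trans <| by
      simpa using mem_range.mp hi
  · simp only [B, eval_sub, eval_C, sub_sub_sub_cancel_right, eval_finsetSum, eval_mul,
      add_comm x 1, bernoulli_eval_one_add, ← sum_sub_distrib, p.eval_eq_sum_range]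
    refine sum_congr rfl fun i _ => ?_
    push_cast
    field_simp
    ring

lemma sum_range_neg_one_pow_mul_choose_mul_eval {R : Type*} [CommRing R] (P : R[X]) {N : ℕ}
    (hP : P.natDegree < N) (y : R) :
    ∑ i ∈ range (N + 1), (-1) ^ (N - i) * N.choose i * P.eval (y + i) = 0 := by
  simpa [fwdDiff_iter_eq_sum_shift, zsmul_eq_mul] using
    congrFun (fwdDiff_iter_eq_zero_of_degree_lt hP) y

end Polynomial

noncomputable def stirlingPoly : ℕ → ℚ[X]
  | 0 => 1
  | n + 1 => (exists_antidifference ((X + 1) * (stirlingPoly n).comp (X + 1))).choose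

lemma stirlingPoly_zero : stirlingPoly 0 = 1 := rfl

lemma stirlingPoly_succ (n : ℕ) : stirlingPoly (n + 1) =
    (exists_antidifference ((X + 1) * (stirlingPoly n).comp (X + 1))).choose := by
  rw [stirlingPoly]

lemma natDegree_stirlingPoly_le (n : ℕ) : (stirlingPoly n).natDegree ≤ 2 * n := by
  induction n with
  | zero => simp [stirlingPoly_zero]
  | succ n ih =>
    refine (exists_antidifference _).choose_spec.1.trans ?_
    have := natDegree_mul_le (p := (X + 1 : ℚ[X])) (q := (stirlingPoly n).comp (X + 1))
    have h1 : (X + 1 : ℚ[X]).natDegree = 1 := by simpa using natDegree_X_add_C (1 : ℚ)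
    rw [natDegree_comp, h1] at this
    omega

lemma stirlingPoly_succ_eval_zero (n : ℕ) : (stirlingPoly (n + 1)).eval 0 = 0 :=
  (exists_antidifference _).choose_spec.2.1

lemma stirlingPoly_succ_eval_add_one (n : ℕ) (x : ℚ) :
    (stirlingPoly (n + 1)).eval (x + 1) =
      (stirlingPoly (n + 1)).eval x + (x + 1) * (stirlingPoly n).eval (x + 1) := by
  have h := (exists_antidifference ((X + 1) * (stirlingPoly n).comp (X + 1))).choose_spec.2.2 x
  rw [← stirlingPoly_succ] at h
  simp only [eval_mul, eval_add, eval_X, eval_one, eval_comp] at h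
  linear_combination h

lemma stirlingPoly_eval_natCast (n x : ℕ) :
    (stirlingPoly n).eval (x : ℚ) = stirling2 (x + n) x := by
  induction n generalizing x with
  | zero => simp [stirlingPoly_zero, stirling2_self]
  | succ n ih =>
    induction x with
    | zero => simp [stirlingPoly_succ_eval_zero, stirling2_succ_zero]
    | succ x ihx =>
      have hrec : stirling2 (x + 1 + (n + 1)) (x + 1) =
          stirling2 (x + (n + 1)) x + (x + 1) * stirling2 (x + 1 + n) (x + 1) := by
        rw [show x + (n + 1) = x + 1 + n by omega]
        exact stirling2_succ_succ (x + 1 + n) x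
      rw [Nat.cast_succ, stirlingPoly_succ_eval_add_one, ihx, ← Nat.cast_add_one, ih, hrec]
      push_cast
      ring

lemma stirlingPoly_eval_neg_natCast {n m : ℕ} (hn : 0 < n) (hm : m ≤ n) :
    (stirlingPoly n).eval (-(m : ℚ)) = 0 := by
  induction n generalizing m with
  | zero => omega
  | succ n ih =>
    induction m with
    | zero => simpa using stirlingPoly_succ_eval_zero n
    | succ m ihm =>
      have hstep := stirlingPoly_succ_eval_add_one n (-((m + 1 : ℕ) : ℚ))
      have hlow : (m : ℚ) * (stirlingPoly n).eval (-(m : ℚ)) = 0 := by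
        rcases Nat.eq_zero_or_pos m with rfl | hm0
        · simp
        · rw [ih (by omega) (by omega), mul_zero]
      push_cast at hstep ⊢
      rw [show -((m : ℚ) + 1) + 1 = -m by ring, ihm (by omega)] at hstep
      linear_combination hlow - hstep

lemma stirlingPoly_eval_neg_natCast_sub (n x : ℕ) :
    (stirlingPoly n).eval (-(x : ℚ) - n) = stirling1 (x + n) x := by
  induction n generalizing x with
  | zero => simp [stirlingPoly_zero, stirling1_self]
  | succ n ih =>
    induction x with
    | zero =>
      simpa [stirling1_succ_zero, neg_sub_left] using
        stirlingPoly_eval_neg_natCast n.succ_pos le_rfl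
    | succ x ihx =>
      have hrec : stirling1 (x + 1 + (n + 1)) (x + 1) =
          stirling1 (x + (n + 1)) x + (x + 1 + n) * stirling1 (x + 1 + n) (x + 1) := by
        rw [show x + (n + 1) = x + 1 + n by omega]
        exact stirling1_succ_succ (x + 1 + n) x
      have hstep := stirlingPoly_succ_eval_add_one n (-((x + 1 : ℕ) : ℚ) - (n + 1 : ℕ))
      rw [show -((x + 1 : ℕ) : ℚ) - (n + 1 : ℕ) + 1 = -(x : ℚ) - (n + 1 : ℕ) by push_cast; ring,
        ihx, show -(x : ℚ) - (n + 1 : ℕ) = -((x + 1 : ℕ) : ℚ) - n by push_cast; ring, ih] at hstep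
      rw [hrec]
      push_cast at hstep ⊢
      linear_combination -hstep

lemma ascPochhammer_eval_natCast_add_one {S : Type*} [Semiring S] (a r : ℕ) :
    (ascPochhammer S r).eval ((a : S) + 1) = (r ! * (a + r).choose r : ℕ) := by
  rw [← Nat.cast_add_one, ascPochhammer_nat_eq_natCast_descFactorial,
    show a + 1 + r - 1 = a + r by omega, Nat.descFactorial_eq_factorial_mul_choose]

lemma ascPochhammer_eval_neg_natCast {R : Type*} [CommRing R] (a r : ℕ) :
    (ascPochhammer R r).eval (-(a : R)) = (-1) ^ r * (r ! * a.choose r : ℕ) := by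
  rw [ascPochhammer_eval_neg_eq_descPochhammer, descPochhammer_eval_eq_descFactorial,
    Nat.descFactorial_eq_factorial_mul_choose]

noncomputable def summandPoly (n q k : ℕ) : ℚ[X] :=
  (ascPochhammer ℚ q).comp (X + 1) * (ascPochhammer ℚ k).comp (X + C ((n + q + 1 : ℕ) : ℚ)) *
    (stirlingPoly n).comp (X + C ((q + 1 : ℕ) : ℚ))

lemma natDegree_summandPoly_le (n q k : ℕ) : (summandPoly n q k).natDegree ≤ q + k + 2 * n := by
  have h1 : (X + 1 : ℚ[X]).natDegree = 1 := by simpa using natDegree_X_add_C (1 : ℚ)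
  refine natDegree_mul_le.trans (add_le_add (natDegree_mul_le.trans (add_le_add ?_ ?_)) ?_) <;>
    rw [natDegree_comp]
  · rw [ascPochhammer_natDegree, h1, mul_one]
  · rw [ascPochhammer_natDegree, natDegree_X_add_C, mul_one]
  · rw [natDegree_X_add_C, mul_one]
    exact natDegree_stirlingPoly_le n

lemma summandPoly_eval_natCast (n q k j : ℕ) :
    (summandPoly n q k).eval (j : ℚ) = (q ! * k ! : ℚ) *
      ((j + q).choose q * (n + k + q + j).choose k * stirling2 (j + n + q + 1) (j + q + 1)) := by
  simp only [summandPoly, eval_mul, eval_comp, eval_add, eval_X, eval_one, eval_C]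
  rw [ascPochhammer_eval_natCast_add_one, ← Nat.cast_add,
    show j + (n + q + 1) = j + n + q + 1 by omega, Nat.cast_succ,
    ascPochhammer_eval_natCast_add_one, ← Nat.cast_add, stirlingPoly_eval_natCast, ← add_assoc,
    show j + n + q + k = n + k + q + j by omega, show j + q + 1 + n = j + n + q + 1 by omega]
  push_cast
  ring

lemma summandPoly_eval_neg_natCast_eq_zero {n q k m : ℕ} (h1 : 1 ≤ m) (h2 : m ≤ n + k + q) :
    (summandPoly n q k).eval (-(m : ℚ)) = 0 := by
  simp only [summandPoly, eval_mul, eval_comp, eval_add, eval_X, eval_one, eval_C]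
  by_cases hq : m ≤ q
  · rw [show -(m : ℚ) + 1 = -((m - 1 : ℕ) : ℚ) by push_cast [h1]; ring,
      ascPochhammer_eval_neg_coe_nat_of_lt (by omega), zero_mul, zero_mul]
  by_cases hk : n + q + 1 ≤ m
  · rw [show -(m : ℚ) + ((n + q + 1 : ℕ) : ℚ) = -((m - (n + q + 1) : ℕ) : ℚ) by
      push_cast [hk]; ring, ascPochhammer_eval_neg_coe_nat_of_lt (by omega), mul_zero, zero_mul]
  · rw [show -(m : ℚ) + ((q + 1 : ℕ) : ℚ) = -((m - (q + 1) : ℕ) : ℚ) by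
      push_cast [show q + 1 ≤ m by omega]; ring,
      stirlingPoly_eval_neg_natCast (by omega) (by omega), mul_zero]

lemma summandPoly_eval_neg_natCast (n q k : ℕ) :
    (summandPoly n q k).eval (-((n + k + q + 1 : ℕ) : ℚ)) = (-1) ^ (q + k) * (q ! * k ! : ℚ) *
      ((n + k + q).choose q * stirling1 (n + k) k) := by
  simp only [summandPoly, eval_mul, eval_comp, eval_add, eval_X, eval_one, eval_C]
  rw [show -((n + k + q + 1 : ℕ) : ℚ) + 1 = -((n + k + q : ℕ) : ℚ) by push_cast; ring,
    show -((n + k + q + 1 : ℕ) : ℚ) + ((n + q + 1 : ℕ) : ℚ) = -(k : ℚ) by push_cast; ring,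
    show -((n + k + q + 1 : ℕ) : ℚ) + ((q + 1 : ℕ) : ℚ) = -(k : ℚ) - n by push_cast; ring,
    ascPochhammer_eval_neg_natCast, ascPochhammer_eval_neg_natCast,
    stirlingPoly_eval_neg_natCast_sub, Nat.choose_self, add_comm k n]
  push_cast
  ring

lemma sum_range_summandPoly_eval {n p q k : ℕ} (hp : n ≤ p) :
    ∑ j ∈ range (p + 1), (-1) ^ (p - j) * ((n + k + p + q + 1).choose (p - j) : ℚ) *
        (summandPoly n q k).eval (j : ℚ) +
      (-1) ^ (n + k + p + q + 1) * (summandPoly n q k).eval (-((n + k + q + 1 : ℕ) : ℚ)) = 0 := by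
  set N := n + k + p + q + 1
  set y := -((n + k + q + 1 : ℕ) : ℚ)
  have h := sum_range_neg_one_pow_mul_choose_mul_eval (summandPoly n q k) (N := N)
    (by have := natDegree_summandPoly_le n q k; omega) y
  have hvanish : ∀ i ∈ range (n + k + q),
      (-1) ^ (N - (i + 1)) * (N.choose (i + 1) : ℚ) *
        (summandPoly n q k).eval (y + (i + 1 : ℕ)) = 0 := by
    intro i hi
    have hi := mem_range.mp hi
    rw [show y + (i + 1 : ℕ) = -((n + k + q - i : ℕ) : ℚ) by push_cast [y, hi.le]; ring,
      summandPoly_eval_neg_natCast_eq_zero (by omega) (by omega), mul_zero]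
  have hshift : ∀ j ∈ range (p + 1),
      (-1) ^ (N - (n + k + q + 1 + j)) * (N.choose (n + k + q + 1 + j) : ℚ) *
        (summandPoly n q k).eval (y + (n + k + q + 1 + j : ℕ)) =
      (-1) ^ (p - j) * (N.choose (p - j) : ℚ) * (summandPoly n q k).eval (j : ℚ) := by
    intro j hj
    have hj := mem_range_succ_iff.mp hj
    rw [show N - (n + k + q + 1 + j) = p - j by omega,
      Nat.choose_symm_of_eq_add (show N = n + k + q + 1 + j + (p - j) by omega),
      show y + (n + k + q + 1 + j : ℕ) = j by push_cast [y]; ring]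
  rw [show N + 1 = n + k + q + 1 + (p + 1) by omega, sum_range_add, sum_range_succ',
    sum_eq_zero hvanish, zero_add, sum_congr rfl hshift] at h
  simpa [add_comm] using h

lemma neg_one_pow_sub_eq {R : Type*} [Monoid R] [HasDistribNeg R] {j p : ℕ} (hj : j ≤ p)
    (n : ℕ) : (-1 : R) ^ (p - j) = (-1) ^ (n + p) * (-1) ^ (n + j) := by
  rw [← pow_add]
  exact neg_one_pow_congr (by simp only [Nat.even_iff]; omega)

theorem stirling_mixed_identity' (n p q k : ℕ) (hp : n ≤ p) :
    ∑ j ∈ Finset.range (p + 1),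
      (-1 : ℤ) ^ (n + j) * ((j + q).choose q) * ((n + k + q + j).choose k) *
        ((n + k + p + q + 1).choose (p - j)) * stirling2 (j + n + q + 1) (j + q + 1)
    = ((n + k + q).choose q : ℤ) * stirling1 (n + k) k := by
  suffices h : ∑ j ∈ range (p + 1),
      (-1 : ℚ) ^ (n + j) * ((j + q).choose q) * ((n + k + q + j).choose k) *
        ((n + k + p + q + 1).choose (p - j)) * stirling2 (j + n + q + 1) (j + q + 1)
      = ((n + k + q).choose q : ℚ) * stirling1 (n + k) k by exact_mod_cast h
  have hsum := sum_range_summandPoly_eval (k := k) (q := q) hp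
  have hterm : ∀ j ∈ range (p + 1), (-1) ^ (p - j) * ((n + k + p + q + 1).choose (p - j) : ℚ) *
      (summandPoly n q k).eval (j : ℚ) = (-1) ^ (n + p) * (q ! * k ! : ℚ) *
        ((-1 : ℚ) ^ (n + j) * ((j + q).choose q) * ((n + k + q + j).choose k) *
          ((n + k + p + q + 1).choose (p - j)) * stirling2 (j + n + q + 1) (j + q + 1)) := by
    intro j hj
    rw [summandPoly_eval_natCast, neg_one_pow_sub_eq (mem_range_succ_iff.mp hj) n]
    ring
  rw [sum_congr rfl hterm, ← mul_sum, summandPoly_eval_neg_natCast] at hsum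
  have hsign : (-1 : ℚ) ^ (n + k + p + q + 1) * (-1) ^ (q + k) = -(-1) ^ (n + p) := by
    rw [← pow_add, neg_one_pow_congr (n := n + p + 1) (by simp only [Nat.even_iff]; omega),
      pow_succ, mul_neg_one]
  refine mul_left_cancel₀ (by positivity : (-1 : ℚ) ^ (n + p) * (q ! * k ! : ℚ) ≠ 0) ?_
  linear_combination hsum - (q ! * k ! : ℚ) * ((n + k + q).choose q * stirling1 (n + k) k) * hsign
end

section
/- For every non-negative integer n, the n-th Bernoulli number (with convention B_1 = -1/2) satisfies B_n = n * ∑_{j=0}^{n} ((-1)^{n+j} / (n+j)) * C(2n, n+j) * s(n+j+1, j+1) for n ≥ 1, where s denotes the unsigned Stirling number of the first kind. -/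
/-!
Let `e_n(N) = e_n(1, …, N)`, so that `s(N + 1, N + 1 - n) = e_n(N)` by Vieta's formula for
`x (x + 1) ⋯ (x + N)`. Newton's identities express `e_n(N)` through the power sums
`1 ^ p + ⋯ + N ^ p`, which are Faulhaber polynomials in `N` vanishing at `0` with derivative
`B'_p` there (the Bernoulli numbers with `B'_1 = 1/2`). Hence `e_n(N) = F_n(N)` for a polynomial
`F_n` of degree `≤ 2n`, and in Newton's recursion only the `n`-th power sum contributes to
`F_n'(0)`, which gives `F_n'(0) = -B_n / n`.

Since `F_n(0) = 0`, write `F_n = X G` with `deg G < 2n`. The `2n`-th finite difference of `G`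
vanishes: `∑ k ≤ 2n, (-1) ^ k C(2n, k) G(k) = 0`. Here `G(0) = F_n'(0)`, and `G(k) = e_n(k) / k`
vanishes for `0 < k < n`, so `B_n / n = ∑ n ≤ k ≤ 2n, (-1) ^ k C(2n, k) e_n(k) / k`.
-/

open Finset

theorem stirling1_eq_stirlingFirst : stirling1 = Nat.stirlingFirst := by
  ext n k
  induction n generalizing k with
  | zero => cases k <;> rfl
  | succ n ih =>
    have hrec : stirling1 (n + 1) k =
        (if k = 0 then 0 else stirling1 n (k - 1)) + n * stirling1 n k := by
      simp [stirling1, rStirling1]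
    cases k with
    | zero => cases n <;> simp [hrec, ih]
    | succ k => simp [hrec, ih, Nat.stirlingFirst_succ_succ, add_comm]

open Polynomial in
theorem Nat.stirlingFirst_succ_succ_eq_coeff_prod {R : Type*} [CommSemiring R] (N k : ℕ) :
    (stirlingFirst (N + 1) (k + 1) : R) = (∏ i : Fin N, (X + C ((i : R) + 1))).coeff k := by
  induction N generalizing k with
  | zero => cases k <;> simp [stirlingFirst_succ_succ, coeff_one]
  | succ N ih =>
    rw [Fin.prod_univ_castSucc, stirlingFirst_succ_succ, mul_add, coeff_add, coeff_mul_C]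
    cases k with
    | zero => simp [ih, mul_comm]
    | succ k =>
      simp only [Fin.val_castSucc, coeff_mul_X, ← ih]
      push_cast
      ring

theorem MvPolynomial.esymm_eq_zero_of_card_lt {σ R : Type*} [CommSemiring R] [Fintype σ] {k : ℕ}
    (h : Fintype.card σ < k) : esymm σ R k = 0 := by
  simp [esymm, powersetCard_eq_empty.mpr h]

theorem Nat.stirlingFirst_succ_succ_eq_aeval_esymm {R : Type*} [CommSemiring R] {N k : ℕ}
    (hk : k ≤ N) : (stirlingFirst (N + 1) (k + 1) : R) =
      MvPolynomial.aeval (fun i : Fin N ↦ (i + 1 : R))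
        (MvPolynomial.esymm (Fin N) R (N - k)) := by
  rw [stirlingFirst_succ_succ_eq_coeff_prod, Finset.prod_X_add_C_coeff _ _ (by simpa using hk)]
  simp [MvPolynomial.esymm, map_sum, map_prod]

theorem MvPolynomial.mul_aeval_esymm_eq_sum {σ R : Type*} [Fintype σ] [CommRing R] (x : σ → R)
    (k : ℕ) : k * aeval x (esymm σ R k) = (-1) ^ (k + 1) * ∑ j ∈ range k,
      (-1) ^ j * aeval x (esymm σ R j) * ∑ i, x i ^ (k - j) := by
  have newton := congrArg (aeval x) (mul_esymm_eq_sum σ R k)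
  rw [map_mul, map_natCast] at newton
  rw [newton, map_mul, map_pow, map_neg, map_one, sum_filter,
    Nat.sum_antidiagonal_eq_sum_range_succ_mk, sum_range_succ, if_neg (lt_irrefl k), add_zero,
    map_sum]
  refine congrArg _ (sum_congr rfl fun j hj ↦ ?_)
  simp [if_pos (mem_range.mp hj), psum]

namespace Polynomial

theorem sum_neg_one_pow_mul_choose_mul_eval_eq_zero {R : Type*} [CommRing R] {P : R[X]} {N : ℕ}
    (hP : P.natDegree < N) :
    ∑ k ∈ range (N + 1), (-1) ^ k * N.choose k * P.eval (k : R) = 0 := by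
  have hdiff := congrFun (fwdDiff_iter_eq_zero_of_degree_lt hP) 0
  rw [fwdDiff_iter_eq_sum_shift, Pi.zero_apply] at hdiff
  rw [← ((isUnit_neg_one (α := R)).pow N).mul_right_eq_zero, mul_sum, ← hdiff]
  refine sum_congr rfl fun k hk ↦ ?_
  have hsign : (-1 : R) ^ N = (-1) ^ k * (-1) ^ (N - k) := by
    rw [← pow_add, Nat.add_sub_cancel' (mem_range_succ_iff.mp hk)]
  have hsq : (-1 : R) ^ k * (-1) ^ k = 1 := by rw [← pow_add, Even.neg_one_pow ⟨k, rfl⟩]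
  rw [zsmul_eq_mul, zero_add, nsmul_one, hsign]
  push_cast
  linear_combination (-1 : R) ^ (N - k) * N.choose k * P.eval (k : R) * hsq

-- The `k = 0` summand is `F(0) / 0 = 0`.
theorem derivative_eval_zero_eq_neg_sum {K : Type*} [Field K] [CharZero K] {F : K[X]} {N : ℕ}
    (hF : F.natDegree ≤ N) (hF0 : F.eval 0 = 0) :
    F.derivative.eval 0 = -∑ k ∈ range (N + 1), (-1) ^ k * N.choose k * F.eval (k : K) / k := by
  obtain ⟨g, rfl⟩ : X ∣ F := X_dvd_iff.mpr (by rwa [coeff_zero_eq_eval_zero])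
  rcases eq_or_ne g 0 with rfl | hg
  · simp
  have hg_deg : g.natDegree < N := by rw [natDegree_X_mul hg] at hF; omega
  have halt := sum_neg_one_pow_mul_choose_mul_eval_eq_zero hg_deg
  rw [sum_range_succ'] at halt ⊢
  have hterm : ∀ k ∈ range N,
      (-1) ^ (k + 1) * N.choose (k + 1) * (X * g).eval ((k + 1 : ℕ) : K) / (k + 1 : ℕ) =
        (-1) ^ (k + 1) * N.choose (k + 1) * g.eval ((k + 1 : ℕ) : K) := by
    intro k _
    rw [eval_mul, eval_X]
    field_simp
  rw [sum_congr rfl hterm, Nat.cast_zero, div_zero, add_zero, derivative_mul, eval_add, eval_mul,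
    eval_mul, derivative_X, eval_one, eval_X, one_mul, zero_mul, add_zero]
  rw [pow_zero, Nat.choose_zero_right, Nat.cast_one, Nat.cast_zero, one_mul, one_mul] at halt
  linear_combination halt

end Polynomial

section

open Polynomial

noncomputable def powerSumPoly (p : ℕ) : ℚ[X] :=
  ∑ i ∈ range (p + 1), C (bernoulli' i * (p + 1).choose i / (p + 1)) * X ^ (p + 1 - i)

theorem powerSumPoly_eval_natCast (p N : ℕ) :
    (powerSumPoly p).eval (N : ℚ) = ∑ i : Fin N, ((i : ℚ) + 1) ^ p := by
  have faulhaber := sum_Ico_pow N p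
  rw [sum_Ico_eq_sum_range, Nat.add_sub_cancel] at faulhaber
  rw [Fin.sum_univ_eq_sum_range (fun i ↦ ((i : ℚ) + 1) ^ p)]
  simp only [add_comm 1, Nat.cast_add, Nat.cast_one] at faulhaber
  simp only [faulhaber, powerSumPoly, eval_finsetSum, eval_C_mul, eval_pow, eval_X]
  exact sum_congr rfl fun i _ ↦ by ring

theorem powerSumPoly_eval_zero (p : ℕ) : (powerSumPoly p).eval 0 = 0 := by
  simpa using powerSumPoly_eval_natCast p 0

theorem natDegree_powerSumPoly_le (p : ℕ) : (powerSumPoly p).natDegree ≤ p + 1 :=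
  natDegree_sum_le_of_forall_le _ _ fun _ _ ↦
    (natDegree_C_mul_X_pow_le _ _).trans (Nat.sub_le _ _)

theorem derivative_powerSumPoly_eval_zero (p : ℕ) :
    (powerSumPoly p).derivative.eval 0 = bernoulli' p := by
  rw [← coeff_zero_eq_eval_zero, coeff_derivative, powerSumPoly, finsetSum_coeff,
    sum_eq_single p]
  · simp [Nat.cast_add_one_ne_zero]
  · intro i hi hip
    rw [coeff_C_mul_X_pow, if_neg (by simp at hi; omega)]
  · simp

-- Newton's identity, with the power sums `1 ^ p + ⋯ + N ^ p` replaced by Faulhaber polynomials.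
noncomputable def esymmPoly : ℕ → ℚ[X]
  | 0 => 1
  | k + 1 => C ((-1 : ℚ) ^ k / (k + 1)) *
      ∑ j : Fin (k + 1), C ((-1 : ℚ) ^ (j : ℕ)) * esymmPoly j * powerSumPoly (k + 1 - j)

theorem esymmPoly_succ (k : ℕ) : esymmPoly (k + 1) = C ((-1 : ℚ) ^ k / (k + 1)) *
    ∑ j ∈ range (k + 1), C ((-1 : ℚ) ^ j) * esymmPoly j * powerSumPoly (k + 1 - j) := by
  rw [esymmPoly,
    Fin.sum_univ_eq_sum_range fun j ↦ C ((-1 : ℚ) ^ j) * esymmPoly j * powerSumPoly (k + 1 - j)]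

theorem esymmPoly_eval_natCast (k N : ℕ) : (esymmPoly k).eval (N : ℚ) =
    MvPolynomial.aeval (fun i : Fin N ↦ (i + 1 : ℚ)) (MvPolynomial.esymm (Fin N) ℚ k) := by
  induction k using Nat.strong_induction_on with
  | _ k ih =>
  cases k with
  | zero => simp [esymmPoly]
  | succ k =>
    have newton := MvPolynomial.mul_aeval_esymm_eq_sum (fun i : Fin N ↦ (i + 1 : ℚ)) (k + 1)
    rw [← eq_inv_mul_iff_mul_eq₀ (Nat.cast_ne_zero.mpr k.succ_ne_zero)] at newton
    rw [newton, esymmPoly_succ, eval_mul, eval_C, eval_finsetSum, mul_sum, mul_sum, mul_sum]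
    refine sum_congr rfl fun j hj ↦ ?_
    rw [eval_mul, eval_mul, eval_C, ih j (by simpa using hj), powerSumPoly_eval_natCast]
    push_cast
    ring

theorem natDegree_esymmPoly_le (k : ℕ) : (esymmPoly k).natDegree ≤ 2 * k := by
  induction k using Nat.strong_induction_on with
  | _ k ih =>
  cases k with
  | zero => simp [esymmPoly]
  | succ k =>
    rw [esymmPoly_succ]
    refine natDegree_C_mul_le _ _ |>.trans <| natDegree_sum_le_of_forall_le _ _ fun j hj ↦ ?_
    have hj : j < k + 1 := mem_range.mp hj
    refine natDegree_mul_le.trans ?_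
    have := natDegree_powerSumPoly_le (k + 1 - j)
    have := ih j hj
    have := natDegree_C_mul_le ((-1 : ℚ) ^ j) (esymmPoly j)
    omega

theorem esymmPoly_eval_natCast_of_lt {k N : ℕ} (h : N < k) :
    (esymmPoly k).eval (N : ℚ) = 0 := by
  rw [esymmPoly_eval_natCast, MvPolynomial.esymm_eq_zero_of_card_lt (by simpa using h), map_zero]

theorem derivative_esymmPoly_eval_zero (k : ℕ) :
    (esymmPoly k).derivative.eval 0 = -_root_.bernoulli k / k := by
  cases k with
  | zero => simp [esymmPoly]
  | succ k =>
    rw [esymmPoly_succ, derivative_C_mul, derivative_sum, eval_mul, eval_C, eval_finsetSum,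
      sum_eq_single 0]
    · simp only [pow_zero, map_one, esymmPoly, mul_one, one_mul, Nat.sub_zero,
        derivative_powerSumPoly_eval_zero, bernoulli'_eq_bernoulli]
      rw [pow_succ, ← mul_assoc, div_mul_eq_mul_div, ← mul_assoc, ← pow_add,
        Even.neg_one_pow ⟨k, rfl⟩]
      push_cast
      ring
    · intro j _ hj
      have hj0 : (esymmPoly j).eval 0 = 0 := by
        simpa using esymmPoly_eval_natCast_of_lt (N := 0) (Nat.pos_of_ne_zero hj)
      simp [derivative_mul, hj0, powerSumPoly_eval_zero]
    · simp

end

theorem bernoulli_eq_sum_stirling1 (n : ℕ) (hn : 1 ≤ n) :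
    bernoulli n = (n : ℚ) * ∑ j ∈ Finset.range (n + 1),
      ((-1 : ℚ) ^ (n + j) / (n + j)) * ((2 * n).choose (n + j)) *
        stirling1 (n + j + 1) (j + 1) := by
  have key := Polynomial.derivative_eval_zero_eq_neg_sum (natDegree_esymmPoly_le n)
    (by simpa using esymmPoly_eval_natCast_of_lt (N := 0) hn)
  rw [derivative_esymmPoly_eval_zero, show 2 * n + 1 = n + (n + 1) by ring, sum_range_add,
    sum_eq_zero fun k hk ↦ by rw [esymmPoly_eval_natCast_of_lt (mem_range.mp hk)]; simp,
    zero_add] at key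
  have hterm : ∀ j ∈ range (n + 1), (-1 : ℚ) ^ (n + j) / (n + j) * (2 * n).choose (n + j) *
      stirling1 (n + j + 1) (j + 1) = (-1) ^ (n + j) * (2 * n).choose (n + j) *
        (esymmPoly n).eval ((n + j : ℕ) : ℚ) / (n + j : ℕ) := by
    intro j _
    rw [stirling1_eq_stirlingFirst, Nat.stirlingFirst_succ_succ_eq_aeval_esymm (by omega),
      ← esymmPoly_eval_natCast, Nat.add_sub_cancel]
    push_cast
    ring
  rw [neg_div, neg_inj, div_eq_iff (by positivity)] at key
  rw [sum_congr rfl hterm, key, mul_comm]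
end

section
/- For every non-negative integer n, the n-th Bernoulli number (with convention B_1 = -1/2) satisfies B_n = (n+1) * C(2n, n)^{-1} * ∑_{j=0}^{n} ((-1)^j / (j+1)) * C(2n, n+j) * S(n+j, j), where S denotes the Stirling number of the second kind. -/
open Nat PowerSeries

theorem stirling2_eq_stirlingSecond : ∀ n k, stirling2 n k = stirlingSecond n k
  | 0, 0 | 0, _ + 1 | _ + 1, 0 => by simp [stirling2, rStirling2]
  | n + 1, k + 1 => by
    rw [stirlingSecond_succ_succ, ← stirling2_eq_stirlingSecond, ← stirling2_eq_stirlingSecond]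
    simp [stirling2, rStirling2, add_comm]

namespace PowerSeries

variable {A : Type*} [CommRing A]

theorem X_sq_dvd_exp_sub_one_sub_X [Algebra ℚ A] : X ^ 2 ∣ exp A - 1 - X := by
  rw [X_pow_dvd_iff]
  intro m hm
  interval_cases m <;> simp [coeff_one, coeff_X]

theorem derivative_exp_sub_one_pow [Algebra ℚ A] (j : ℕ) :
    d⁄dX A ((exp A - 1) ^ (j + 1)) = (j + 1) • ((exp A - 1) ^ (j + 1) + (exp A - 1) ^ j) := by
  rw [Derivation.leibniz_pow, map_sub, derivative_one, sub_zero, derivative_exp,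
    add_tsub_cancel_right, smul_eq_mul, nsmul_eq_mul, nsmul_eq_mul]
  ring

theorem factorial_mul_coeff_exp_sub_one_pow [Algebra ℚ A] (m j : ℕ) :
    (m ! : A) * coeff m ((exp A - 1) ^ j) = (j ! * stirlingSecond m j : ℕ) := by
  induction m generalizing j with
  | zero => cases j <;> simp
  | succ m ih =>
    cases j with
    | zero => simp [coeff_one]
    | succ j =>
      have h := congrArg (coeff m) (derivative_exp_sub_one_pow (A := A) j)
      rw [coeff_derivative, map_nsmul, map_add, nsmul_eq_mul] at h
      have ih₁ := ih (j + 1)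
      have ih₀ := ih j
      rw [factorial_succ, stirlingSecond_succ_succ, factorial_succ j] at *
      push_cast at h ih₀ ih₁ ⊢
      linear_combination (m ! : A) * h + (j + 1 : A) * (ih₁ + ih₀)

theorem coeff_eq_sum_coeff_pow_of_mul_eq_X {B E : A⟦X⟧} (hBE : B * E = X) (hE : X ^ 2 ∣ E - X)
    (n : ℕ) : coeff n B = ∑ j ∈ Finset.range (n + 1),
      (-1) ^ j * ((n + 1).choose (j + 1) : A) * coeff (n + j) (E ^ j) := by
  have hvanish : X ^ (2 * n + 2) ∣ B * (X - E) ^ (n + 1) := by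
    rw [show 2 * n + 2 = 2 * (n + 1) by ring, pow_mul]
    exact Dvd.dvd.mul_left (pow_dvd_pow_of_dvd (dvd_sub_comm.mp hE) _) B
  have hexpand : B * (X - E) ^ (n + 1) = B * X ^ (n + 1) - ∑ j ∈ Finset.range (n + 1),
      C ((-1) ^ j * ((n + 1).choose (j + 1) : A)) * (E ^ j * X ^ (n - j + 1)) := by
    rw [sub_eq_neg_add, add_pow, Finset.sum_range_succ', mul_add, Finset.mul_sum, sub_eq_neg_add,
      ← Finset.sum_neg_distrib]
    congr 1
    · refine Finset.sum_congr rfl fun j _ => ?_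
      rw [Nat.add_sub_add_right, neg_pow, map_mul, map_pow, map_neg, map_one, map_natCast]
      linear_combination
        (-1) ^ (j + 1) * E ^ j * X ^ (n - j) * ((n + 1).choose (j + 1) : A⟦X⟧) * hBE
    · simp
  have hcoeff := congrArg (coeff (2 * n + 1)) hexpand
  rw [(X_pow_dvd_iff.mp hvanish) _ (by omega), map_sub, map_sum, eq_comm, sub_eq_zero,
    show 2 * n + 1 = n + (n + 1) by ring, coeff_mul_X_pow] at hcoeff
  rw [hcoeff]
  refine Finset.sum_congr rfl fun j hj => ?_
  have hj : j ≤ n := Nat.lt_succ_iff.mp (Finset.mem_range.mp hj)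
  rw [coeff_C_mul, show n + (n + 1) = (n + j) + (n - j + 1) by omega, coeff_mul_X_pow]

end PowerSeries

theorem bernoulli_div_factorial_eq_sum (n : ℕ) :
    bernoulli n / n ! = ∑ j ∈ Finset.range (n + 1),
      (-1) ^ j * ((n + 1).choose (j + 1) : ℚ) * (j ! * stirlingSecond (n + j) j / (n + j)!) := by
  have h := coeff_eq_sum_coeff_pow_of_mul_eq_X (bernoulliPowerSeries_mul_exp_sub_one ℚ)
    X_sq_dvd_exp_sub_one_sub_X n
  simp only [bernoulliPowerSeries, coeff_mk, Algebra.algebraMap_self, RingHom.id_apply] at h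
  rw [h]
  refine Finset.sum_congr rfl fun j _ => congrArg _ ?_
  rw [eq_div_iff (by positivity), mul_comm, factorial_mul_coeff_exp_sub_one_pow, Nat.cast_mul]

theorem factorial_mul_choose_succ_mul_factorial_div_factorial {n j : ℕ} (hj : j ≤ n) :
    (n ! * (n + 1).choose (j + 1) * j ! / (n + j)! : ℚ) =
      (n + 1) * ((2 * n).choose n : ℚ)⁻¹ * (2 * n).choose (n + j) / (j + 1) := by
  rw [Nat.cast_choose ℚ (by omega : j + 1 ≤ n + 1), Nat.cast_choose ℚ (by omega : n ≤ 2 * n),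
    Nat.cast_choose ℚ (by omega : n + j ≤ 2 * n), show n + 1 - (j + 1) = n - j by omega,
    show 2 * n - n = n by omega, show 2 * n - (n + j) = n - j by omega, factorial_succ,
    factorial_succ j]
  push_cast
  field_simp

theorem bernoulli_eq_sum_stirling2 (n : ℕ) :
    bernoulli n = ((n : ℚ) + 1) * (((2 * n).choose n : ℚ))⁻¹ *
      ∑ j ∈ Finset.range (n + 1),
        ((-1 : ℚ) ^ j / (j + 1)) * ((2 * n).choose (n + j)) * stirling2 (n + j) j := by
  rw [← div_mul_cancel₀ (bernoulli n) (by positivity : (n ! : ℚ) ≠ 0),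
    bernoulli_div_factorial_eq_sum, Finset.sum_mul, Finset.mul_sum]
  refine Finset.sum_congr rfl fun j hj => ?_
  have hjn := factorial_mul_choose_succ_mul_factorial_div_factorial
    (Nat.lt_succ_iff.mp (Finset.mem_range.mp hj))
  rw [stirling2_eq_stirlingSecond]
  linear_combination (-1) ^ j * (stirlingSecond (n + j) j : ℚ) * hjn
end

section
/- (Melzak's formula.) Let f be a polynomial of degree at most p over ℚ (or any field of characteristic zero), let α be a scalar such that α + j ≠ 0 for j = 0, 1, ..., p, and let x be a scalar. Then f(α + x) = α * C(α+p, p) * ∑_{j=0}^{p} ((-1)^j / (α+j)) * C(p, j) * f(x - j), where C(α+p, p) = (α+p)(α+p-1)⋯(α+1)/p! is the generalized binomial coefficient. -/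
/-! Melzak's formula is Lagrange interpolation of `u ↦ f (x + u)`, a polynomial of degree `≤ p`,
at the `p + 1` nodes `0, -1, …, -p`, written in barycentric form and evaluated at `u = α`. The
nodal polynomial takes the value `α (α + 1) ⋯ (α + p) = α · p! · C(α + p, p)` at `α`, and the
weight of the node `-j` is `1 / ∏_{i ≠ j} (i - j) = (-1)^j C(p, j) / p!`. -/

open Polynomial Finset Lagrange Nat

theorem ascPochhammer_eval_eq_prod_range {R : Type*} [CommSemiring R] (n : ℕ) (r : R) :
    (ascPochhammer R n).eval r = ∏ j ∈ range n, (r + j) := by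
  induction n with
  | zero => simp
  | succ n ih => rw [ascPochhammer_succ_eval, ih, prod_range_succ]

theorem mul_descPochhammer_eval_add_natCast {R : Type*} [CommRing R] (n : ℕ) (r : R) :
    r * (descPochhammer R n).eval (r + n) = (ascPochhammer R (n + 1)).eval r := by
  calc r * (descPochhammer R n).eval (r + n) = (descPochhammer R (n + 1)).eval (r + n) := by
        rw [descPochhammer_succ_eval, add_sub_cancel_right, mul_comm]
    _ = (ascPochhammer R (n + 1)).eval r := by
        rw [descPochhammer_eval_eq_ascPochhammer]
        congr 1
        push_cast
        ring

theorem prod_erase_range_natCast_sub {R : Type*} [CommRing R] {n j : ℕ} (hj : j ≤ n) :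
    ∏ i ∈ (range (n + 1)).erase j, ((i : R) - j) = (-1) ^ j * j ! * (n - j)! := by
  have hsplit : (range (n + 1)).erase j = range j ∪ Ico (j + 1) (n + 1) := by
    ext i; simp only [mem_erase, mem_range, mem_union, mem_Ico]; omega
  have hdisj : Disjoint (range j) (Ico (j + 1) (n + 1)) := by
    rw [disjoint_left]; intro i; simp only [mem_range, mem_Ico]; omega
  have hbelow : ∏ i ∈ range j, ((i : R) - j) = (-1) ^ j * j ! := by
    rw [← descFactorial_self, ← descPochhammer_eval_eq_descFactorial,
      descPochhammer_eval_eq_prod_range,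
      prod_congr rfl fun (i : ℕ) _ => (neg_sub (j : R) i).symm, prod_neg, card_range]
  have habove : ∏ i ∈ Ico (j + 1) (n + 1), ((i : R) - j) = (n - j)! := by
    rw [prod_Ico_eq_prod_range, ← prod_range_add_one_eq_factorial, Nat.cast_prod,
      show n + 1 - (j + 1) = n - j by omega]
    exact prod_congr rfl fun i _ => by push_cast; ring
  rw [hsplit, prod_union hdisj, hbelow, habove]

theorem nodalWeight_range_neg_natCast {K : Type*} [Field K] [CharZero K] {n j : ℕ}
    (hj : j ≤ n) :
    nodalWeight (range (n + 1)) (fun i : ℕ => -(i : K)) j = (-1) ^ j * n.choose j / n ! := by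
  have hfac : ((n.choose j * j ! * (n - j)! : ℕ) : K) = n ! := by
    rw [choose_mul_factorial_mul_factorial hj]
  push_cast at hfac
  simp only [nodalWeight, neg_sub_neg, prod_inv_distrib, prod_erase_range_natCast_sub hj]
  have hchoose : (n.choose j : K) ≠ 0 := Nat.cast_ne_zero.2 (choose_pos hj).ne'
  rw [← hfac]
  field_simp
  rw [← pow_mul, mul_comm j, pow_mul, neg_one_sq, one_pow]

theorem eval_nodal_range_neg_natCast {R : Type*} [CommRing R] (n : ℕ) (r : R) :
    (nodal (range (n + 1)) (fun i : ℕ => -(i : R))).eval r =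
      r * (descPochhammer R n).eval (r + n) := by
  rw [eval_nodal, mul_descPochhammer_eval_add_natCast, ascPochhammer_eval_eq_prod_range]
  simp only [sub_neg_eq_add]

theorem melzak_formula {K : Type*} [Field K] [CharZero K] (p : ℕ) (f : Polynomial K)
    (hf : f.degree ≤ p) (α x : K) (hα : ∀ j : ℕ, j ≤ p → α + j ≠ 0) :
    f.eval (α + x) =
      α * ((descPochhammer K p).eval (α + p) / p.factorial) *
        ∑ j ∈ Finset.range (p + 1),
          ((-1) ^ j / (α + j)) * (p.choose j : K) * f.eval (x - j) := by
  set v : ℕ → K := fun i => -(i : K)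
  have hv : Set.InjOn v (range (p + 1)) := (neg_injective.comp Nat.cast_injective).injOn
  have hdeg : (taylor x f).degree < #(range (p + 1)) := by
    rw [degree_taylor, card_range]
    exact hf.trans_lt (WithBot.coe_lt_coe.2 p.lt_succ_self)
  have hα_node : ∀ j ∈ range (p + 1), α ≠ v j := fun j hj h =>
    hα j (Nat.lt_succ_iff.1 (mem_range.1 hj)) (by simp [v, h])
  calc f.eval (α + x) = (taylor x f).eval α := (taylor_eval x f α).symm
    _ = (interpolate (range (p + 1)) v fun j => (taylor x f).eval (v j)).eval α := by
        rw [← eq_interpolate hv hdeg]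
    _ = _ := by
        rw [eval_interpolate_not_at_node _ hα_node, eval_nodal_range_neg_natCast, mul_sum, mul_sum]
        refine sum_congr rfl fun j hj => ?_
        rw [nodalWeight_range_neg_natCast (Nat.lt_succ_iff.1 (mem_range.1 hj)), taylor_eval]
        simp only [v, sub_neg_eq_add, neg_add_eq_sub]
        ring
end
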